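/- arXiv:1507.06862 — 5 statements merged into one kernel-verified Lean document; each statement's English description precedes it below -/
import Mathlib

section
/- Let 𝒮=(S,𝒞,rk) be a finitary semimatroid with poset of flats ℒ. Then ℒ is a finitary geometric semilattice; precisely: (i) ℒ is a chain-finite meet-semilattice, the meet of two flats X,Y being cl(X∩Y), and ℒ is ranked with rank function given by rk; (ii) there exists N∈ℕ such that every interval of ℒ is a finite geometric lattice (a finite, atomic, semimodular lattice) with at most N atoms; (iii) for every independent set A of atoms of ℒ (i.e., ⋁A exists and rk(⋁A)=|A|) and every x∈ℒ with rk(x)<rk(⋁A), there is an atom a∈A with a≰x such that the join x∨a exists in ℒ. -/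
open scoped Classical Pointwise


/-- A finitary semimatroid on the ground set `S`: a nonempty, finite-dimensional
simplicial complex `C` of finite subsets of `S` (containing all singletons), together
with a rank function satisfying (R1)-(R3), (CR1), (CR2). -/
structure FinSemimatroid (S : Type*) [DecidableEq S] where
  C : Set (Finset S)
  rk : Finset S → ℕ
  nonempty : C.Nonempty
  downClosed : ∀ ⦃X Y : Finset S⦄, X ∈ C → Y ⊆ X → Y ∈ C
  singleton_mem : ∀ x : S, ({x} : Finset S) ∈ C
  finDim : ∃ d : ℕ, ∀ X ∈ C, X.card ≤ d
  r1 : ∀ X ∈ C, rk X ≤ X.card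
  r2 : ∀ ⦃X Y : Finset S⦄, X ∈ C → Y ∈ C → X ⊆ Y → rk X ≤ rk Y
  r3 : ∀ ⦃X Y : Finset S⦄, X ∈ C → Y ∈ C → X ∪ Y ∈ C →
    rk (X ∪ Y) + rk (X ∩ Y) ≤ rk X + rk Y
  cr1 : ∀ ⦃X Y : Finset S⦄, X ∈ C → Y ∈ C → rk X = rk (X ∩ Y) → X ∪ Y ∈ C
  cr2 : ∀ ⦃X Y : Finset S⦄, X ∈ C → Y ∈ C → rk X < rk Y →
    ∃ y ∈ Y, y ∉ X ∧ insert y X ∈ C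

namespace FinSemimatroid

variable {S : Type*} [DecidableEq S]

/-- The closure of a central set. -/
def cl (M : FinSemimatroid S) (X : Finset S) : Set S :=
  {y : S | insert y X ∈ M.C ∧ M.rk (insert y X) = M.rk X}

/-- A flat is a closed central set. -/
def IsFlat (M : FinSemimatroid S) (X : Finset S) : Prop :=
  X ∈ M.C ∧ M.cl X = (X : Set S)

/-- The poset of flats, ordered by inclusion. -/
abbrev Flats (M : FinSemimatroid S) : Type _ := {X : Finset S // M.IsFlat X}

/-- A simple finitary semimatroid. -/
def Simple (M : FinSemimatroid S) : Prop :=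
  (∀ x : S, M.rk {x} = 1) ∧
    ∀ x y : S, x ≠ y → ({x, y} : Finset S) ∈ M.C → M.rk {x, y} = 2

end FinSemimatroid

/-- A poset is chain-finite if all its chains are finite. -/
def ChainFinite (L : Type*) [PartialOrder L] : Prop :=
  ∀ c : Set L, IsChain (· ≤ ·) c → c.Finite

/-- An atom of a bounded-below poset: an element covering the minimum. -/
def PosetAtom {L : Type*} [PartialOrder L] (a : L) : Prop :=
  ∃ bot : L, IsBot bot ∧ bot ⋖ a

/-- `L` (with rank function `rk`) is a finite geometric lattice (finite, bounded below,
a lattice, ranked by `rk`, atomic and semimodular) with at most `N` atoms. -/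
def IsFinGeomLatticeAtMost (L : Type*) [PartialOrder L] (rk : L → ℕ) (N : ℕ) : Prop :=
  Finite L ∧
    ∃ bot : L, IsBot bot ∧
      (∀ x y : L, ∃ m : L, IsGLB {x, y} m) ∧
      (∀ x y : L, ∃ j : L, IsLUB {x, y} j) ∧
      (∀ x y : L, x ⋖ y → rk y = rk x + 1) ∧
      (∀ x : L, ∃ A : Set L, (∀ a ∈ A, bot ⋖ a) ∧ IsLUB A x) ∧
      (∀ x y m j : L, IsGLB {x, y} m → IsLUB {x, y} j → rk j + rk m ≤ rk x + rk y) ∧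
      Nat.card {a : L | bot ⋖ a} ≤ N

/-!
Everything reduces to the closure operator. The closure of a central set `X` is finite, since
central sets have bounded size, and it is the smallest flat containing `X`, of the same rank
as `X`. Hence two flats `X`, `Y` have the meet `cl (X ∩ Y)`, they have the join `cl (X ∪ Y)` as
soon as they lie in a common flat, and (R3) makes every interval semimodular. A flat `F` and a
point `s ∉ F` with `insert s F` central span a flat covering `F`, of rank `rk F + 1`: this makes
the rank strictly monotone on flats, computes it along covers, and shows that intervals are
atomic. For (iii), an atom containing a point `y` is `cl {y}`, and (CR2), applied to `x` and the
union of the atoms in `A`, yields such a `y ∉ x` with `insert y x` central; its closure bounds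
both `x` and `cl {y}`.
-/

theorem Set.Icc.coe_covBy_coe {α : Type*} [PartialOrder α] {a b : α} {x y : Set.Icc a b} :
    (x : α) ⋖ y ↔ x ⋖ y :=
  Set.OrdConnected.apply_covBy_apply_iff (OrderEmbedding.subtype (· ∈ Set.Icc a b))
    (by rw [OrderEmbedding.coe_subtype, Subtype.range_coe]; exact Set.ordConnected_Icc)

namespace FinSemimatroid

variable {S : Type*} [DecidableEq S] {M : FinSemimatroid S} {X Y Z F : Finset S} {y : S}

lemma rk_insert_le (hX : X ∈ M.C) (h : insert y X ∈ M.C) :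
    M.rk (insert y X) ≤ M.rk X + 1 := by
  have h3 := M.r3 (M.singleton_mem y) hX (by rwa [← Finset.insert_eq])
  have h1 := M.r1 {y} (M.singleton_mem y)
  rw [← Finset.insert_eq] at h3
  rw [Finset.card_singleton] at h1
  omega

lemma rk_insert_of_notMem_cl (hX : X ∈ M.C) (h : insert y X ∈ M.C) (hy : y ∉ M.cl X) :
    M.rk (insert y X) = M.rk X + 1 := by
  have hle := M.r2 hX h (Finset.subset_insert y X)
  have hne : M.rk (insert y X) ≠ M.rk X := fun he => hy ⟨h, he⟩
  have := rk_insert_le hX h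
  omega

lemma union_mem_and_rk_union_eq (hX : X ∈ M.C) (hY : Y ∈ M.C)
    (h : M.rk X = M.rk (X ∩ Y)) : X ∪ Y ∈ M.C ∧ M.rk (X ∪ Y) = M.rk Y := by
  have hU := M.cr1 hX hY h
  have := M.r3 hX hY hU
  have := M.r2 hY hU Finset.subset_union_right
  exact ⟨hU, by omega⟩

lemma subset_cl (hX : X ∈ M.C) : (X : Set S) ⊆ M.cl X := fun x hx => by
  change insert x X ∈ M.C ∧ _
  rw [Finset.insert_eq_of_mem hx]
  exact ⟨hX, rfl⟩

lemma cl_mono (hX : X ∈ M.C) (hY : Y ∈ M.C) (hXY : X ⊆ Y) : M.cl X ⊆ M.cl Y := by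
  rintro z ⟨hzC, hzrk⟩
  have hI : insert z X ∩ Y ∈ M.C := M.downClosed hzC Finset.inter_subset_left
  have h : M.rk (insert z X) = M.rk (insert z X ∩ Y) :=
    le_antisymm (hzrk ▸ M.r2 hX hI (Finset.subset_inter (Finset.subset_insert z X) hXY))
      (M.r2 hI hzC Finset.inter_subset_left)
  have := union_mem_and_rk_union_eq hzC hY h
  rwa [Finset.insert_union, Finset.union_eq_right.2 hXY] at this

lemma union_mem_and_rk_union_of_subset_cl (hX : X ∈ M.C) (hF : (F : Set S) ⊆ M.cl X) :
    X ∪ F ∈ M.C ∧ M.rk (X ∪ F) = M.rk X := by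
  induction F using Finset.induction_on with
  | empty => simpa using hX
  | insert a F _ ih =>
    rw [Finset.coe_insert, Set.insert_subset_iff] at hF
    obtain ⟨hC, hrk⟩ := ih hF.2
    obtain ⟨haC, hark⟩ := cl_mono hX hC Finset.subset_union_left hF.1
    rw [Finset.union_insert]
    exact ⟨haC, hark.trans hrk⟩

lemma cl_finite (hX : X ∈ M.C) : (M.cl X).Finite := by
  obtain ⟨d, hd⟩ := M.finDim
  by_contra hinf
  obtain ⟨F, hFcl, hFcard⟩ := Set.Infinite.exists_subset_card_eq hinf (d + 1)
  have hF := M.downClosed (union_mem_and_rk_union_of_subset_cl hX hFcl).1 Finset.subset_union_right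
  have := hd F hF
  omega

lemma union_toFinset_cl (hX : X ∈ M.C) :
    X ∪ (cl_finite hX).toFinset = (cl_finite hX).toFinset :=
  Finset.union_eq_right.2 (by simpa using subset_cl hX)

lemma isFlat_toFinset_cl (hX : X ∈ M.C) : M.IsFlat (cl_finite hX).toFinset := by
  obtain ⟨hZC, hZrk⟩ := union_mem_and_rk_union_of_subset_cl hX (cl_finite hX).coe_toFinset.le
  rw [union_toFinset_cl hX] at hZC hZrk
  refine ⟨hZC, Set.Subset.antisymm ?_ (subset_cl hZC)⟩
  rintro z ⟨hzC, hzrk⟩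
  have hsub := Finset.insert_subset_insert z (Finset.union_eq_right.1 (union_toFinset_cl hX))
  have hzXC := M.downClosed hzC hsub
  rw [Set.Finite.coe_toFinset]
  exact ⟨hzXC, le_antisymm (hZrk ▸ hzrk ▸ M.r2 hzXC hzC hsub)
    (M.r2 hX hzXC (Finset.subset_insert z X))⟩

noncomputable def closure (M : FinSemimatroid S) (hX : X ∈ M.C) : M.Flats :=
  ⟨(cl_finite hX).toFinset, isFlat_toFinset_cl hX⟩

lemma coe_closure (hX : X ∈ M.C) : ((M.closure hX).1 : Set S) = M.cl X :=
  Set.Finite.coe_toFinset _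

lemma subset_closure (hX : X ∈ M.C) : X ⊆ (M.closure hX).1 :=
  Finset.union_eq_right.1 (union_toFinset_cl hX)

lemma rk_closure (hX : X ∈ M.C) : M.rk (M.closure hX).1 = M.rk X := by
  have := (union_mem_and_rk_union_of_subset_cl hX (cl_finite hX).coe_toFinset.le).2
  rwa [union_toFinset_cl hX] at this

lemma closure_le_iff (hX : X ∈ M.C) {F : M.Flats} : M.closure hX ≤ F ↔ X ⊆ F.1 := by
  refine ⟨fun h => (subset_closure hX).trans h, fun h => ?_⟩
  change (M.closure hX).1 ⊆ F.1
  rw [← Finset.coe_subset, coe_closure, ← F.2.2]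
  exact cl_mono hX F.2.1 h

lemma rk_mono {X Y : M.Flats} (h : X ≤ Y) : M.rk X.1 ≤ M.rk Y.1 := M.r2 X.2.1 Y.2.1 h

lemma rk_insert_flat {F : M.Flats} (hs : y ∉ F.1) (h : insert y F.1 ∈ M.C) :
    M.rk (insert y F.1) = M.rk F.1 + 1 :=
  rk_insert_of_notMem_cl F.2.1 h (by rwa [F.2.2])

lemma rk_strictMono : StrictMono fun X : M.Flats => M.rk X.1 := by
  intro X Y h
  obtain ⟨y, hyY, hyX⟩ := Finset.exists_of_ssubset h
  have hsub : insert y X.1 ⊆ Y.1 := Finset.insert_subset hyY h.le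
  have hins := M.downClosed Y.2.1 hsub
  calc M.rk X.1 < M.rk (insert y X.1) := by rw [rk_insert_flat hyX hins]; exact Nat.lt_add_one _
    _ ≤ M.rk Y.1 := M.r2 hins Y.2.1 hsub

lemma covBy_of_rk_eq_succ {X Y : M.Flats} (h : X < Y) (hr : M.rk Y.1 = M.rk X.1 + 1) :
    X ⋖ Y :=
  ⟨h, fun Z h1 h2 => by
    have : M.rk X.1 < M.rk Z.1 := rk_strictMono h1
    have : M.rk Z.1 < M.rk Y.1 := rk_strictMono h2
    omega⟩

lemma covBy_closure_insert {F : M.Flats} (hs : y ∉ F.1) (h : insert y F.1 ∈ M.C) :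
    F ⋖ M.closure h := by
  have hsub := subset_closure h
  refine covBy_of_rk_eq_succ ?_ (by rw [rk_closure, rk_insert_flat hs h])
  exact Finset.ssubset_iff_of_subset ((Finset.subset_insert y F.1).trans hsub) |>.2
    ⟨y, hsub (Finset.mem_insert_self y F.1), hs⟩

lemma closure_eq_of_covBy {X Y : M.Flats} (hXY : X ⋖ Y) (hZ : Z ∈ M.C)
    (hXZ : X ≤ M.closure hZ) (hZY : Z ⊆ Y.1) (hZX : ¬Z ⊆ X.1) : M.closure hZ = Y :=
  (hXY.eq_or_eq hXZ ((closure_le_iff hZ).2 hZY)).resolve_left fun h =>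
    hZX (h ▸ subset_closure hZ)

lemma rk_eq_succ_of_covBy {X Y : M.Flats} (h : X ⋖ Y) : M.rk Y.1 = M.rk X.1 + 1 := by
  obtain ⟨y, hyY, hyX⟩ := Finset.exists_of_ssubset h.lt
  have hsub : insert y X.1 ⊆ Y.1 := Finset.insert_subset hyY h.le
  have hins := M.downClosed Y.2.1 hsub
  rw [← closure_eq_of_covBy h hins (covBy_closure_insert hyX hins).le hsub
    fun h' => hyX (h' (Finset.mem_insert_self y X.1)), rk_closure, rk_insert_flat hyX hins]

lemma chainFinite : ChainFinite M.Flats := by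
  intro c hc
  obtain ⟨d, hd⟩ := M.finDim
  have hinj : Set.InjOn (fun X : M.Flats => M.rk X.1) c := by
    intro X hX Y hY hXY
    by_contra hne
    rcases hc.total hX hY with h | h
    · exact (rk_strictMono (h.lt_of_ne hne)).ne hXY
    · exact (rk_strictMono (h.lt_of_ne (Ne.symm hne))).ne' hXY
  refine Set.Finite.of_finite_image ((Set.finite_Iic d).subset ?_) hinj
  rintro _ ⟨X, -, rfl⟩
  exact (M.r1 X.1 X.2.1).trans (hd X.1 X.2.1)

lemma exists_isGLB (X Y : M.Flats) :
    ∃ Z : M.Flats, (Z.1 : Set S) = M.cl (X.1 ∩ Y.1) ∧ IsGLB {X, Y} Z := by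
  have hI : X.1 ∩ Y.1 ∈ M.C := M.downClosed X.2.1 Finset.inter_subset_left
  refine ⟨M.closure hI, coe_closure hI, ?_, fun U hU => ?_⟩
  · rintro _ (rfl | rfl)
    exacts [(closure_le_iff hI).2 Finset.inter_subset_left,
      (closure_le_iff hI).2 Finset.inter_subset_right]
  · exact (Finset.subset_inter (hU (.inl rfl)) (hU (.inr rfl))).trans (subset_closure hI)

lemma isLUB_closure_union {X Y : M.Flats} (h : X.1 ∪ Y.1 ∈ M.C) :
    IsLUB {X, Y} (M.closure h) := by
  refine ⟨?_, fun U hU =>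
    (closure_le_iff h).2 (Finset.union_subset (hU (.inl rfl)) (hU (.inr rfl)))⟩
  rintro _ (rfl | rfl)
  exacts [Finset.subset_union_left.trans (subset_closure h),
    Finset.subset_union_right.trans (subset_closure h)]

lemma rk_closure_union_add_rk_le {X Y L : M.Flats} (h : X.1 ∪ Y.1 ∈ M.C)
    (hL : L ∈ lowerBounds {X, Y}) :
    M.rk (M.closure h).1 + M.rk L.1 ≤ M.rk X.1 + M.rk Y.1 := by
  have hLXY : L.1 ⊆ X.1 ∩ Y.1 := Finset.subset_inter (hL (.inl rfl)) (hL (.inr rfl))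
  have := M.r2 L.2.1 (M.downClosed X.2.1 Finset.inter_subset_left) hLXY
  have := M.r3 X.2.1 Y.2.1 h
  rw [rk_closure]
  omega

section Interval

variable {a b : M.Flats}

def iccEmbeddingPowerset (a b : M.Flats) : Set.Icc a b ↪ b.1.powerset :=
  ⟨fun z => ⟨z.1.1, Finset.mem_powerset.2 z.2.2⟩, fun _ _ h =>
    Subtype.val_injective (Subtype.val_injective (Subtype.mk.inj h))⟩

lemma finite_Icc (a b : M.Flats) : Finite (Set.Icc a b) :=
  Finite.of_injective _ (iccEmbeddingPowerset a b).injective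

lemma card_Icc_le (a b : M.Flats) : Nat.card (Set.Icc a b) ≤ 2 ^ b.1.card := by
  have := Nat.card_le_card_of_injective _ (iccEmbeddingPowerset a b).injective
  rwa [Nat.card_eq_finsetCard, Finset.card_powerset] at this

lemma union_mem_of_Icc (x y : Set.Icc a b) : x.1.1 ∪ y.1.1 ∈ M.C :=
  M.downClosed b.2.1 (Finset.union_subset x.2.2 y.2.2)

lemma closure_union_mem_Icc (x y : Set.Icc a b) :
    M.closure (union_mem_of_Icc x y) ∈ Set.Icc a b :=
  have hj := isLUB_closure_union (union_mem_of_Icc x y)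
  ⟨x.2.1.trans (hj.1 (.inl rfl)), hj.2 (by rintro _ (rfl | rfl); exacts [x.2.2, y.2.2])⟩

lemma exists_isGLB_Icc (x y : Set.Icc a b) : ∃ m : Set.Icc a b, IsGLB {x, y} m := by
  obtain ⟨m, -, hm⟩ := exists_isGLB x.1 y.1
  have hmem : m ∈ Set.Icc a b :=
    ⟨hm.2 (by rintro _ (rfl | rfl); exacts [x.2.1, y.2.1]), (hm.1 (.inl rfl)).trans x.2.2⟩
  exact ⟨⟨m, hmem⟩, .of_image (f := Subtype.val) Iff.rfl (by rwa [Set.image_pair])⟩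

lemma exists_isLUB_Icc (x y : Set.Icc a b) : ∃ j : Set.Icc a b, IsLUB {x, y} j :=
  ⟨⟨_, closure_union_mem_Icc x y⟩,
    .of_image (f := Subtype.val) Iff.rfl
      (by rw [Set.image_pair]; exact isLUB_closure_union (union_mem_of_Icc x y))⟩

lemma rk_add_rk_le_of_Icc {x y m j : Set.Icc a b} (hm : IsGLB {x, y} m) (hj : IsLUB {x, y} j) :
    M.rk j.1.1 + M.rk m.1.1 ≤ M.rk x.1.1 + M.rk y.1.1 := by
  have hJub := (isLUB_closure_union (union_mem_of_Icc x y)).1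
  have hjJ : j ≤ ⟨_, closure_union_mem_Icc x y⟩ :=
    hj.2 (by rintro _ (rfl | rfl); exacts [hJub (.inl rfl), hJub (.inr rfl)])
  have hm' : m.1 ∈ lowerBounds {x.1, y.1} := by
    rintro _ (rfl | rfl); exacts [hm.1 (.inl rfl), hm.1 (.inr rfl)]
  have : M.rk j.1.1 ≤ M.rk (M.closure (union_mem_of_Icc x y)).1 := rk_mono hjJ
  have := rk_closure_union_add_rk_le (union_mem_of_Icc x y) hm'
  omega

lemma isLUB_atoms_Icc (hab : a ≤ b) (x : Set.Icc a b) :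
    IsLUB {z | ⟨a, Set.left_mem_Icc.2 hab⟩ ⋖ z ∧ z ≤ x} x := by
  refine ⟨fun z hz => hz.2, fun u hu s hs => ?_⟩
  by_cases hsa : s ∈ a.1
  · exact u.2.1 hsa
  have hsub : insert s a.1 ⊆ x.1.1 := Finset.insert_subset hs x.2.1
  have hins : insert s a.1 ∈ M.C := M.downClosed x.1.2.1 hsub
  have hcov := covBy_closure_insert hsa hins
  have hZx : M.closure hins ≤ x.1 := (closure_le_iff hins).2 hsub
  have hZu : (⟨_, hcov.le, hZx.trans x.2.2⟩ : Set.Icc a b) ≤ u :=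
    hu ⟨Set.Icc.coe_covBy_coe.1 hcov, hZx⟩
  exact hZu (subset_closure hins (Finset.mem_insert_self s a.1))

lemma isFinGeomLatticeAtMost_Icc {d : ℕ} (hd : ∀ X ∈ M.C, X.card ≤ d) (hab : a ≤ b) :
    IsFinGeomLatticeAtMost (Set.Icc a b) (fun z => M.rk z.1.1) (2 ^ d) := by
  refine ⟨finite_Icc a b, ⟨a, Set.left_mem_Icc.2 hab⟩, fun z => z.2.1, exists_isGLB_Icc,
    exists_isLUB_Icc, fun _ _ h => rk_eq_succ_of_covBy (Set.Icc.coe_covBy_coe.2 h),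
    fun x => ⟨_, fun _ hz => hz.1, isLUB_atoms_Icc hab x⟩,
    fun _ _ _ _ => rk_add_rk_le_of_Icc, ?_⟩
  have := finite_Icc a b
  calc Nat.card _ ≤ Nat.card (Set.Icc a b) := Finite.card_subtype_le _
    _ ≤ 2 ^ b.1.card := card_Icc_le a b
    _ ≤ 2 ^ d := Nat.pow_le_pow_right two_pos (hd b.1 b.2.1)

end Interval

lemma exists_atom_not_le_and_isLUB (A : Finset M.Flats) {jA x : M.Flats}
    (hA : ∀ a ∈ A, PosetAtom a) (hjA : IsLUB ↑A jA) (hx : M.rk x.1 < M.rk jA.1) :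
    ∃ a ∈ A, ¬a ≤ x ∧ ∃ j : M.Flats, IsLUB {x, a} j := by
  have hY : A.biUnion Subtype.val ∈ M.C :=
    M.downClosed jA.2.1 (Finset.biUnion_subset.2 fun a ha => hjA.1 ha)
  have hjY : jA ≤ M.closure hY :=
    hjA.2 fun a ha => (Finset.subset_biUnion_of_mem Subtype.val ha).trans (subset_closure hY)
  obtain ⟨y, hyY, hyx, hins⟩ :=
    M.cr2 x.2.1 hY (hx.trans_le (rk_closure hY ▸ rk_mono hjY))
  obtain ⟨a, ha, hya⟩ := Finset.mem_biUnion.1 hyY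
  obtain ⟨B, hB, hBa⟩ := hA a ha
  have ha_eq : M.closure (M.singleton_mem y) = a :=
    closure_eq_of_covBy hBa _ (hB _) (Finset.singleton_subset_iff.2 hya)
      fun h => hyx (hB x (Finset.singleton_subset_iff.1 h))
  have hax : a ≤ M.closure hins := by
    rw [← ha_eq, closure_le_iff]
    exact Finset.singleton_subset_iff.2 (subset_closure hins (Finset.mem_insert_self y x.1))
  have hxa : x.1 ∪ a.1 ∈ M.C := M.downClosed (M.closure hins).2.1
    (Finset.union_subset ((Finset.subset_insert y x.1).trans (subset_closure hins)) hax)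
  exact ⟨a, ha, fun h => hyx (h hya), _, isLUB_closure_union hxa⟩

end FinSemimatroid

/-- The poset of flats of a finitary semimatroid is a finitary
geometric semilattice: (i) it is a chain-finite meet-semilattice with meets given by
`cl (X ∩ Y)`, ranked by `rk`; (ii) there is `N` such that every interval is a finite
geometric lattice with at most `N` atoms; (iii) the exchange property (G4) holds. -/
theorem flats_isFinitaryGeometricSemilattice
    {S : Type*} [DecidableEq S] (M : FinSemimatroid S) :
    ChainFinite M.Flats ∧
    (∀ X Y : M.Flats, ∃ Z : M.Flats,
      (↑Z.1 : Set S) = M.cl (X.1 ∩ Y.1) ∧ IsGLB {X, Y} Z) ∧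
    (∀ X Y : M.Flats, X ⋖ Y → M.rk Y.1 = M.rk X.1 + 1) ∧
    (∃ N : ℕ, ∀ a b : M.Flats, a ≤ b →
      IsFinGeomLatticeAtMost ↥(Set.Icc a b) (fun z => M.rk z.1.1) N) ∧
    (∀ (A : Finset M.Flats) (jA : M.Flats),
      (∀ a ∈ A, PosetAtom a) → IsLUB ↑A jA → M.rk jA.1 = A.card →
      ∀ x : M.Flats, M.rk x.1 < M.rk jA.1 →
        ∃ a ∈ A, ¬a ≤ x ∧ ∃ j : M.Flats, IsLUB {x, a} j) := by
  obtain ⟨d, hd⟩ := M.finDim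
  exact ⟨FinSemimatroid.chainFinite, FinSemimatroid.exists_isGLB,
    fun _ _ => FinSemimatroid.rk_eq_succ_of_covBy,
    ⟨2 ^ d, fun _ _ => FinSemimatroid.isFinGeomLatticeAtMost_Icc hd⟩,
    fun A _ hA hjA _ _ hx => FinSemimatroid.exists_atom_not_le_and_isLUB A hA hjA hx⟩
end

section
/- Let 𝔖 be a cofinite G-semimatroid. Then the pair (E_𝔖, rk̲) always satisfies (R2) and (R3): rk̲ is monotone and submodular on subsets of the finite set E_𝔖, with rk̲(∅)=0, so (E_𝔖,rk̲) is a polymatroid. Moreover, (E_𝔖,rk̲) satisfies (R1), i.e., rk̲(A)≤|A| for every A⊆E_𝔖, if and only if the action is weakly translative; in that case (E_𝔖,rk̲) is a matroid. -/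
open scoped Classical Pointwise


/-- A `G`-semimatroid: an action of `G` on a finitary semimatroid, preserving
centrality and rank. -/
structure GSemimatroid (G S : Type*) [Group G] [MulAction G S] [DecidableEq S]
    extends FinSemimatroid S where
  smul_mem : ∀ (g : G) ⦃X : Finset S⦄, X ∈ C → X.image (g • ·) ∈ C
  rk_smul : ∀ (g : G) ⦃X : Finset S⦄, X ∈ C → rk (X.image (g • ·)) = rk X

namespace GSemimatroid

variable {G S : Type*} [Group G] [MulAction G S] [DecidableEq S]

/-- The set of orbits `E_𝔖 = S/G`. -/
abbrev E (G S : Type*) [Group G] [MulAction G S] : Type _ :=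
  Quotient (MulAction.orbitRel G S)

/-- The orbit of a point. -/
def orbOf (G : Type*) {S : Type*} [Group G] [MulAction G S] (x : S) : E G S :=
  Quotient.mk (MulAction.orbitRel G S) x

/-- `X̲`: the set of orbits met by `X`. -/
def under (G : Type*) {S : Type*} [Group G] [MulAction G S] (X : Finset S) :
    Set (E G S) :=
  orbOf G '' (X : Set S)

variable (M : GSemimatroid G S)

/-- `𝒞̲ = {X̲ : X ∈ 𝒞}`. -/
def CQ : Set (Set (E G S)) := {A | ∃ X ∈ M.C, under G X = A}

/-- `rk̲ A = max { rk X : X ∈ 𝒞, X̲ ⊆ A }`. -/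
noncomputable def rkQ (A : Set (E G S)) : ℕ :=
  sSup {n : ℕ | ∃ X ∈ M.C, under G X ⊆ A ∧ M.rk X = n}

/-- `𝒞_A`: the central sets lying over `A`. -/
def CA (A : Set (E G S)) : Set (Finset S) := {X | X ∈ M.C ∧ under G X = A}

/-- The type of central sets. -/
abbrev Cen : Type _ := {X : Finset S // X ∈ M.C}

/-- The `G`-orbit relation on central sets. -/
def cenRel (X Y : M.Cen) : Prop := ∃ g : G, X.1.image (g • ·) = Y.1

/-- The set `𝒞/G` of orbits of central sets. -/
def COrb : Type _ := Quot M.cenRel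

/-- The action is cofinite if `𝒞/G` is finite. -/
def Cofinite : Prop := Finite M.COrb

/-- `m_𝔖(A) = |𝒞_A / G|`. -/
noncomputable def m (A : Set (E G S)) : ℕ :=
  Nat.card {O : M.COrb // ∃ X : M.Cen, under G X.1 = A ∧ Quot.mk M.cenRel X = O}

def WeaklyTranslative : Prop :=
  ∀ (g : G) (x : S), ({x, g • x} : Finset S) ∈ M.C →
    M.rk {x, g • x} = M.rk ({x} : Finset S)

def Translative : Prop :=
  ∀ (g : G) (x : S), ({x, g • x} : Finset S) ∈ M.C → g • x = x

def Centered : Prop := ∃ X ∈ M.C, under G X = (Set.univ : Set (E G S))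

def Normal (_M : GSemimatroid G S) : Prop :=
  ∀ x : S, Subgroup.Normal (MulAction.stabilizer G x)

def AlmostArithmetic : Prop := M.Translative ∧ M.Normal

/-- The action is arithmetic: almost-arithmetic, and for every central `X` the set
`W(X) ⊆ Γ^X` is a subgroup (expressed via representative families of group elements). -/
def Arithmetic : Prop :=
  M.AlmostArithmetic ∧
    ∀ ⦃X : Finset S⦄, X ∈ M.C → ∀ γ δ : S → G,
      X.image (fun x => γ x • x) ∈ M.C → X.image (fun x => δ x • x) ∈ M.C →
        X.image (fun x => (γ x * δ x) • x) ∈ M.C ∧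
          X.image (fun x => (γ x)⁻¹ • x) ∈ M.C

/-- Remove from `X` all elements of the orbit `a₀`. -/
noncomputable def strip (a₀ : E G S) (X : Finset S) : Finset S :=
  X.filter (fun x => orbOf G x ≠ a₀)

/-- The Tutte polynomial of a `G`-semimatroid, as a function `ℤ × ℤ → ℤ`. -/
noncomputable def Tutte (x y : ℤ) : ℤ :=
  ∑ᶠ A ∈ M.CQ, (M.m A : ℤ) * (x - 1) ^ (M.rkQ Set.univ - M.rkQ A) *
    (y - 1) ^ (Nat.card A - M.rkQ A)

end GSemimatroid

open GSemimatroid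

/-! By (CR2), a central set realising `rk̲ (A ∩ B)` grows inside its union with one realising
`rk̲ (A ∪ B)` to a central set `Y` of rank at least `rk̲ (A ∪ B)`; splitting `Y` into its parts
over `A` and over `B` and applying (R3) gives submodularity of `rk̲`.

Weak translativity says that a second point `gx` of an orbit never raises rank, so by (R3)
discarding repeated orbits from a central set `X` does not lower its rank, whence
`rk X ≤ |X̲|`. Conversely, (R1) for a single orbit gives `rk {x, gx} ≤ 1`, and
`rk {x, gx} ≤ rk {x} + rk {gx} = 2 rk {x}` settles the case `rk {x} = 0`. -/

namespace FinSemimatroid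

variable {S : Type*} [DecidableEq S] (M : FinSemimatroid S)

theorem empty_mem : (∅ : Finset S) ∈ M.C := by
  obtain ⟨X, hX⟩ := M.nonempty
  exact M.downClosed hX X.empty_subset

theorem rk_empty : M.rk ∅ = 0 :=
  Nat.le_zero.mp (M.r1 ∅ M.empty_mem)

theorem exists_rk_le : ∃ d, ∀ X ∈ M.C, M.rk X ≤ d := by
  obtain ⟨d, hd⟩ := M.finDim
  exact ⟨d, fun X hX => (M.r1 X hX).trans (hd X hX)⟩

theorem rk_union_le {X Y : Finset S} (hX : X ∈ M.C) (hY : Y ∈ M.C) (hXY : X ∪ Y ∈ M.C) :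
    M.rk (X ∪ Y) ≤ M.rk X + M.rk Y :=
  (Nat.le_add_right _ _).trans (M.r3 hX hY hXY)

theorem rk_le_rk_erase_of_rk_pair_eq {X : Finset S} {x y : S} (hX : X ∈ M.C) (hx : x ∈ X)
    (hy : y ∈ X) (hxy : x ≠ y) (hpair : M.rk {x, y} = M.rk {x}) :
    M.rk X ≤ M.rk (X.erase y) := by
  have hunion : X.erase y ∪ {x, y} = X := by
    ext a; simp only [Finset.mem_union, Finset.mem_erase, Finset.mem_insert,
      Finset.mem_singleton]; grind
  have hinter : X.erase y ∩ {x, y} = {x} := by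
    ext a; simp only [Finset.mem_inter, Finset.mem_erase, Finset.mem_insert,
      Finset.mem_singleton]; grind
  have hsub := M.r3 (M.downClosed hX (X.erase_subset y))
    (M.downClosed hX (Finset.insert_subset hx (Finset.singleton_subset_iff.mpr hy)))
    (by rwa [hunion])
  rw [hunion, hinter, hpair] at hsub
  omega

theorem exists_superset_subset_union_rk_le {X Z : Finset S} (hX : X ∈ M.C) (hZ : Z ∈ M.C) :
    ∃ Y ∈ M.C, X ⊆ Y ∧ Y ⊆ X ∪ Z ∧ M.rk Z ≤ M.rk Y := by
  have hXmem : X ∈ (X ∪ Z).powerset.filter fun Y => X ⊆ Y ∧ Y ∈ M.C :=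
    Finset.mem_filter.mpr ⟨Finset.mem_powerset.mpr Finset.subset_union_left, subset_rfl, hX⟩
  obtain ⟨Y, hY, hmax⟩ := Finset.exists_max_image _ Finset.card ⟨X, hXmem⟩
  simp only [Finset.mem_filter, Finset.mem_powerset] at hY hmax
  obtain ⟨hYXZ, hXY, hYC⟩ := hY
  refine ⟨Y, hYC, hXY, hYXZ, not_lt.mp fun hlt => ?_⟩
  obtain ⟨z, hzZ, hzY, hins⟩ := M.cr2 hYC hZ hlt
  have hcard := hmax (insert z Y) ⟨Finset.insert_subset (Finset.mem_union_right _ hzZ) hYXZ,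
    hXY.trans (Finset.subset_insert _ _), hins⟩
  rw [Finset.card_insert_of_notMem hzY] at hcard
  omega

end FinSemimatroid

namespace GSemimatroid

variable {G S : Type*} [Group G] [MulAction G S]

theorem orbOf_smul (g : G) (x : S) : orbOf G (g • x) = orbOf G x :=
  Quot.sound (MulAction.mem_orbit x g)

theorem coe_image_orbOf (X : Finset S) : (X.image (orbOf G) : Set (E G S)) = under G X :=
  Finset.coe_image

theorem under_mono {X Y : Finset S} (h : X ⊆ Y) : under G X ⊆ under G Y :=
  Set.image_mono (Finset.coe_subset.mpr h)

theorem under_union [DecidableEq S] (X Y : Finset S) :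
    under G (X ∪ Y) = under G X ∪ under G Y := by
  simp only [under, Finset.coe_union, Set.image_union]

theorem under_eq_empty {X : Finset S} : under G X = ∅ ↔ X = ∅ := by
  simp [under]

theorem under_image_smul [DecidableEq S] (g : G) (X : Finset S) :
    under G (X.image (g • ·)) = under G X := by
  simp only [under, Finset.coe_image, Set.image_image, orbOf_smul]

theorem under_filter_subset (X : Finset S) (A : Set (E G S)) :
    under G (X.filter fun x => orbOf G x ∈ A) ⊆ A := by
  rintro _ ⟨x, hx, rfl⟩
  exact (Finset.mem_filter.mp hx).2

variable [DecidableEq S] (M : GSemimatroid G S)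

theorem nonempty_rk_over (A : Set (E G S)) :
    {n : ℕ | ∃ X ∈ M.C, under G X ⊆ A ∧ M.rk X = n}.Nonempty :=
  ⟨0, ∅, M.empty_mem, by simp [under], M.rk_empty⟩

theorem bddAbove_rk_over (A : Set (E G S)) :
    BddAbove {n : ℕ | ∃ X ∈ M.C, under G X ⊆ A ∧ M.rk X = n} := by
  obtain ⟨d, hd⟩ := M.exists_rk_le
  exact ⟨d, by rintro _ ⟨X, hX, -, rfl⟩; exact hd X hX⟩

theorem rk_le_rkQ {X : Finset S} {A : Set (E G S)} (hX : X ∈ M.C) (hXA : under G X ⊆ A) :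
    M.rk X ≤ M.rkQ A :=
  le_csSup (M.bddAbove_rk_over A) ⟨X, hX, hXA, rfl⟩

theorem rkQ_le {A : Set (E G S)} {n : ℕ} (h : ∀ X ∈ M.C, under G X ⊆ A → M.rk X ≤ n) :
    M.rkQ A ≤ n :=
  csSup_le (M.nonempty_rk_over A) <| by
    rintro _ ⟨X, hX, hXA, rfl⟩
    exact h X hX hXA

theorem exists_rk_eq_rkQ (A : Set (E G S)) :
    ∃ X ∈ M.C, under G X ⊆ A ∧ M.rk X = M.rkQ A :=
  Nat.sSup_mem (M.nonempty_rk_over A) (M.bddAbove_rk_over A)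

theorem rkQ_empty : M.rkQ ∅ = 0 :=
  Nat.le_zero.mp <| M.rkQ_le fun X _ hX => by
    rw [Set.subset_empty_iff, under_eq_empty] at hX
    rw [hX, M.rk_empty]

theorem rkQ_mono {A B : Set (E G S)} (hAB : A ⊆ B) : M.rkQ A ≤ M.rkQ B :=
  M.rkQ_le fun _ hX hXA => M.rk_le_rkQ hX (hXA.trans hAB)

theorem rkQ_union_add_rkQ_inter_le (A B : Set (E G S)) :
    M.rkQ (A ∪ B) + M.rkQ (A ∩ B) ≤ M.rkQ A + M.rkQ B := by
  obtain ⟨X, hX, hXAB, hrX⟩ := M.exists_rk_eq_rkQ (A ∩ B)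
  obtain ⟨Z, hZ, hZAB, hrZ⟩ := M.exists_rk_eq_rkQ (A ∪ B)
  obtain ⟨Y, hY, hXY, hYXZ, hZY⟩ := M.exists_superset_subset_union_rk_le hX hZ
  have hYAB : under G Y ⊆ A ∪ B := (under_mono hYXZ).trans <| by
    rw [under_union]
    exact Set.union_subset (hXAB.trans (Set.inter_subset_left.trans Set.subset_union_left)) hZAB
  set YA := Y.filter fun y => orbOf G y ∈ A
  set YB := Y.filter fun y => orbOf G y ∈ B
  have hYA : YA ∈ M.C := M.downClosed hY (Finset.filter_subset _ _)
  have hYB : YB ∈ M.C := M.downClosed hY (Finset.filter_subset _ _)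
  have hunion : YA ∪ YB = Y := by
    rw [← Finset.filter_or]
    exact Finset.filter_true_of_mem fun y hy => hYAB ⟨y, hy, rfl⟩
  have hXinter : X ⊆ YA ∩ YB := by
    rw [← Finset.filter_and]
    exact fun x hx => Finset.mem_filter.mpr ⟨hXY hx, hXAB ⟨x, hx, rfl⟩⟩
  have hsub := M.r3 hYA hYB (by rwa [hunion])
  rw [hunion] at hsub
  calc M.rkQ (A ∪ B) + M.rkQ (A ∩ B) ≤ M.rk Y + M.rk (YA ∩ YB) := by
        rw [← hrZ, ← hrX]
        exact add_le_add hZY (M.r2 hX (M.downClosed hYA Finset.inter_subset_left) hXinter)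
    _ ≤ M.rk YA + M.rk YB := hsub
    _ ≤ M.rkQ A + M.rkQ B := add_le_add (M.rk_le_rkQ hYA (under_filter_subset Y A))
        (M.rk_le_rkQ hYB (under_filter_subset Y B))

def underOrb : M.COrb → Set (E G S) :=
  Quot.lift (fun X => under G X.1) fun X Y (h : M.cenRel X Y) => by
    obtain ⟨g, hg⟩ := h
    rw [← hg, under_image_smul]

/-- `e ↦ {e}` embeds `E_𝔖` into the image of `underOrb`, since `{Gx}` is the image of `{x}`. -/
theorem finite_E_of_cofinite (hcof : M.Cofinite) : Finite (E G S) := by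
  have : Finite M.COrb := hcof
  refine Finite.of_injective (β := Set.range M.underOrb) (fun e => ⟨{e}, ?_⟩)
    fun e f h => Set.singleton_injective (congrArg Subtype.val h)
  obtain ⟨x, rfl⟩ := Quotient.exists_rep e
  exact ⟨Quot.mk _ ⟨{x}, M.singleton_mem x⟩, by simp [underOrb, under, orbOf]⟩

theorem weaklyTranslative_of_rkQ_le_card (h : ∀ A : Set (E G S), M.rkQ A ≤ Nat.card A) :
    M.WeaklyTranslative := by
  intro g x hpair
  have hx : M.rk {x} ≤ 1 := M.r1 {x} (M.singleton_mem x)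
  have hgx : M.rk {g • x} = M.rk {x} := by simpa using M.rk_smul g (M.singleton_mem x)
  have hle_one : M.rk {x, g • x} ≤ 1 := by
    have hunder : under G ({x, g • x} : Finset S) = {orbOf G x} := by
      rw [under, Finset.coe_pair, Set.image_pair, orbOf_smul, Set.pair_eq_singleton]
    simpa [hunder] using (M.rk_le_rkQ hpair le_rfl).trans (h _)
  have hle_add : M.rk {x, g • x} ≤ M.rk {x} + M.rk {g • x} :=
    M.rk_union_le (M.singleton_mem x) (M.singleton_mem _) hpair
  have hge : M.rk {x} ≤ M.rk {x, g • x} :=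
    M.r2 (M.singleton_mem x) hpair (Finset.singleton_subset_iff.mpr (Finset.mem_insert_self _ _))
  omega

theorem rk_le_card_image_orbOf (hwt : M.WeaklyTranslative) {X : Finset S} (hX : X ∈ M.C) :
    M.rk X ≤ (X.image (orbOf G)).card := by
  induction X using Finset.strongInduction with
  | H X ih =>
  by_cases hinj : Set.InjOn (orbOf G) (X : Set S)
  · rw [Finset.card_image_of_injOn hinj]
    exact M.r1 X hX
  obtain ⟨x, hx, y, hy, horb, hxy⟩ : ∃ x ∈ X, ∃ y ∈ X, orbOf G x = orbOf G y ∧ x ≠ y := by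
    simpa [Set.InjOn] using hinj
  obtain ⟨g, rfl⟩ : ∃ g : G, g • x = y := Quotient.exact horb.symm
  have hpair : M.rk {x, g • x} = M.rk {x} :=
    hwt g x (M.downClosed hX (Finset.insert_subset hx (Finset.singleton_subset_iff.mpr hy)))
  have himage : (X.erase (g • x)).image (orbOf G) = X.image (orbOf G) := by
    conv_rhs => rw [← Finset.insert_erase hy]
    rw [Finset.image_insert, ← horb, Finset.insert_eq_of_mem
      (Finset.mem_image_of_mem _ (Finset.mem_erase.mpr ⟨hxy, hx⟩))]
  calc M.rk X ≤ M.rk (X.erase (g • x)) := M.rk_le_rk_erase_of_rk_pair_eq hX hx hy hxy hpair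
    _ ≤ ((X.erase (g • x)).image (orbOf G)).card :=
        ih _ (Finset.erase_ssubset hy) (M.downClosed hX (X.erase_subset _))
    _ = (X.image (orbOf G)).card := by rw [himage]

theorem rkQ_le_card_of_weaklyTranslative [Finite (E G S)] (hwt : M.WeaklyTranslative)
    (A : Set (E G S)) : M.rkQ A ≤ Nat.card A :=
  M.rkQ_le fun X hX hXA => calc
    M.rk X ≤ (X.image (orbOf G)).card := M.rk_le_card_image_orbOf hwt hX
    _ = Nat.card (under G X) := by
        rw [← coe_image_orbOf, Nat.card_coe_set_eq, Set.ncard_coe_finset]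
    _ ≤ Nat.card A := Nat.card_mono (Set.toFinite A) hXA

end GSemimatroid

/-- For a cofinite `G`-semimatroid, `rk̲` is normalized, monotone and
submodular (so `(E_𝔖, rk̲)` is a polymatroid); it satisfies (R1) iff the action is
weakly translative (and then `(E_𝔖, rk̲)` is a matroid). -/
theorem orbitRank_polymatroid_and_R1_iff_weaklyTranslative
    {G S : Type*} [Group G] [MulAction G S] [DecidableEq S]
    (M : GSemimatroid G S) (hcof : M.Cofinite) :
    M.rkQ (∅ : Set (E G S)) = 0 ∧
    (∀ A B : Set (E G S), A ⊆ B → M.rkQ A ≤ M.rkQ B) ∧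
    (∀ A B : Set (E G S), M.rkQ (A ∪ B) + M.rkQ (A ∩ B) ≤ M.rkQ A + M.rkQ B) ∧
    ((∀ A : Set (E G S), M.rkQ A ≤ Nat.card A) ↔ M.WeaklyTranslative) := by
  have := M.finite_E_of_cofinite hcof
  exact ⟨M.rkQ_empty, fun _ _ => M.rkQ_mono, M.rkQ_union_add_rkQ_inter_le,
    M.weaklyTranslative_of_rkQ_le_card, M.rkQ_le_card_of_weaklyTranslative⟩
end

section
/- Let 𝔖 be a weakly translative cofinite G-semimatroid. Then for every central set X∈𝒞 one has rk(X)=rk̲(X̲). -/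
open scoped Classical Pointwise


open GSemimatroid

/-!
Call `y` parallel to `x` when `{x, y}` is either not central or central of the same rank as
`{x}`; by submodularity, adding to a central set an element parallel to one of its members does
not raise the rank. If every element of `Y` is parallel to some element of `X` but
`rk Y > rk X`, the augmentation axiom (CR2) enlarges `X` inside `𝒞` by an element of `Y` without
changing its rank, and repeating this contradicts finite dimensionality. Weak translativity makes
any two points of one orbit parallel, so `X` has maximal rank among the central sets `Y` with
`Y̲ ⊆ X̲`.
-/

namespace FinSemimatroid

variable {S : Type*} [DecidableEq S] (M : FinSemimatroid S)

theorem rk_insert_eq_of_rk_pair_eq {X : Finset S} {x y : S} (hX : X ∈ M.C) (hxX : x ∈ X)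
    (hins : insert y X ∈ M.C) (hxy : ({x, y} : Finset S) ∈ M.C → M.rk {x, y} = M.rk {x}) :
    M.rk (insert y X) = M.rk X := by
  by_cases hyX : y ∈ X
  · rw [Finset.insert_eq_of_mem hyX]
  have hpair : ({x, y} : Finset S) ∈ M.C :=
    M.downClosed hins (Finset.insert_subset (Finset.mem_insert_of_mem hxX) (by simp))
  have hunion : ({x, y} : Finset S) ∪ X = insert y X := by grind
  have hinter : ({x, y} : Finset S) ∩ X = {x} := by grind
  have hsubmod := M.r3 hpair hX (hunion ▸ hins)
  rw [hunion, hinter, hxy hpair] at hsubmod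
  have hmono := M.r2 hX hins (Finset.subset_insert y X)
  omega

theorem rk_le_of_forall_exists_rk_pair_eq {X Y : Finset S} (hX : X ∈ M.C) (hY : Y ∈ M.C)
    (hpar : ∀ y ∈ Y, ∃ x ∈ X, ({x, y} : Finset S) ∈ M.C → M.rk {x, y} = M.rk {x}) :
    M.rk Y ≤ M.rk X := by
  by_contra! hlt
  obtain ⟨y, hyY, hyX, hins⟩ := M.cr2 hX hY hlt
  obtain ⟨x, hxX, hxy⟩ := hpar y hyY
  have hrk := M.rk_insert_eq_of_rk_pair_eq hX hxX hins hxy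
  have := rk_le_of_forall_exists_rk_pair_eq hins hY fun y' hy' =>
    (hpar y' hy').imp fun _ h => ⟨Finset.mem_insert_of_mem h.1, h.2⟩
  omega
termination_by M.finDim.choose - X.card
decreasing_by
  have hcard := M.finDim.choose_spec _ hins
  rw [Finset.card_insert_of_notMem hyX] at hcard ⊢
  omega

end FinSemimatroid

namespace GSemimatroid

variable {G S : Type*} [Group G] [MulAction G S] [DecidableEq S] {M : GSemimatroid G S}

theorem WeaklyTranslative.rk_pair_eq {x y : S} (hwt : M.WeaklyTranslative)
    (horb : orbOf G y = orbOf G x) (hxy : ({x, y} : Finset S) ∈ M.C) :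
    M.rk {x, y} = M.rk {x} := by
  obtain ⟨g, rfl⟩ : y ∈ MulAction.orbit G x := Quotient.exact horb
  exact hwt g x hxy

theorem WeaklyTranslative.rk_le_of_under_subset {X Y : Finset S} (hwt : M.WeaklyTranslative)
    (hX : X ∈ M.C) (hY : Y ∈ M.C) (hYX : under G Y ⊆ under G X) : M.rk Y ≤ M.rk X := by
  refine M.rk_le_of_forall_exists_rk_pair_eq hX hY fun y hy => ?_
  obtain ⟨x, hxX, horb⟩ := hYX (Set.mem_image_of_mem _ hy)
  exact ⟨x, hxX, hwt.rk_pair_eq horb.symm⟩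

end GSemimatroid

theorem rk_eq_rkQ_under_general
    {G S : Type*} [Group G] [MulAction G S] [DecidableEq S]
    (M : GSemimatroid G S) (hwt : M.WeaklyTranslative) :
    ∀ X ∈ M.C, M.rk X = M.rkQ (under G X) := by
  intro X hX
  refine (IsGreatest.csSup_eq (s := {n | ∃ Y ∈ M.C, under G Y ⊆ under G X ∧ M.rk Y = n})
    ⟨⟨X, hX, subset_rfl, rfl⟩, ?_⟩).symm
  rintro _ ⟨Y, hY, hYX, rfl⟩
  exact hwt.rk_le_of_under_subset hX hY hYX

/-- For a weakly translative cofinite `G`-semimatroid,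
`rk X = rk̲ X̲` for every central set `X`. -/
theorem rk_eq_rkQ_under
    {G S : Type*} [Group G] [MulAction G S] [DecidableEq S]
    (M : GSemimatroid G S) (hcof : M.Cofinite) (hwt : M.WeaklyTranslative) :
    ∀ X ∈ M.C, M.rk X = M.rkQ (under G X) :=
  rk_eq_rkQ_under_general M hwt
end

section
/- Let 𝔖 be a cofinite G-semimatroid and A⊆E_𝔖, and set J(A):={X∈𝒞 : X̲⊆A}. If X and Y are both inclusion-maximal elements of J(A), then rk(X)=rk(Y). -/
open scoped Classical Pointwise


open GSemimatroid

namespace GSemimatroid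

variable {G S : Type*} [Group G] [MulAction G S] [DecidableEq S]

theorem under_insert (y : S) (X : Finset S) :
    under G (insert y X) = insert (orbOf G y) (under G X) := by
  rw [under, Finset.coe_insert, Set.image_insert_eq]
  rfl

theorem rk_le_of_maximal (M : GSemimatroid G S) {A : Set (E G S)} {X Y : Finset S}
    (hX : X ∈ M.C) (hY : Y ∈ M.C) (hXA : under G X ⊆ A) (hYA : under G Y ⊆ A)
    (hXmax : ∀ Z ∈ M.C, under G Z ⊆ A → X ⊆ Z → Z = X) :
    M.rk Y ≤ M.rk X := by
  by_contra! hlt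
  obtain ⟨y, hyY, hyX, hins⟩ := M.cr2 hX hY hlt
  have hinsA : under G (insert y X) ⊆ A := by
    rw [under_insert]
    exact Set.insert_subset (hYA ⟨y, hyY, rfl⟩) hXA
  have hXeq := hXmax _ hins hinsA (Finset.subset_insert y X)
  exact hyX (hXeq ▸ Finset.mem_insert_self y X)

end GSemimatroid

theorem rank_of_maximal_in_JA_general
    {G S : Type*} [Group G] [MulAction G S] [DecidableEq S]
    (M : GSemimatroid G S) (A : Set (E G S))
    (X Y : Finset S) (hX : X ∈ M.C) (hY : Y ∈ M.C)
    (hXA : under G X ⊆ A) (hYA : under G Y ⊆ A)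
    (hXmax : ∀ Z ∈ M.C, under G Z ⊆ A → X ⊆ Z → Z = X)
    (hYmax : ∀ Z ∈ M.C, under G Z ⊆ A → Y ⊆ Z → Z = Y) :
    M.rk X = M.rk Y :=
  le_antisymm (M.rk_le_of_maximal hY hX hYA hXA hYmax)
    (M.rk_le_of_maximal hX hY hXA hYA hXmax)

/-- In a cofinite `G`-semimatroid, any two inclusion-maximal elements
of `J(A) = {X ∈ 𝒞 : X̲ ⊆ A}` have the same rank. -/
theorem rank_of_maximal_in_JA
    {G S : Type*} [Group G] [MulAction G S] [DecidableEq S]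
    (M : GSemimatroid G S) (hcof : M.Cofinite) (A : Set (E G S))
    (X Y : Finset S) (hX : X ∈ M.C) (hY : Y ∈ M.C)
    (hXA : under G X ⊆ A) (hYA : under G Y ⊆ A)
    (hXmax : ∀ Z ∈ M.C, under G Z ⊆ A → X ⊆ Z → Z = X)
    (hYmax : ∀ Z ∈ M.C, under G Z ⊆ A → Y ⊆ Z → Z = Y) :
    M.rk X = M.rk Y :=
  rank_of_maximal_in_JA_general M A X Y hX hY hXA hYA hXmax hYmax
end

section
/- Let 𝔖 be an almost-arithmetic cofinite G-semimatroid and X∈𝒞 (so stab(X), the setwise stabilizer of X, equals ∩_{x∈X}stab(x)). Then: (a) for every X'∈𝒞 with X'̲=X̲ one has stab(X)=stab(X'); (b) if x₀∈X and rk(X∖{x₀})=rk(X), then stab(X)=stab(X∖{x₀}). -/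
open scoped Classical Pointwise


open GSemimatroid

/-! Translativity forces an element `g` of the setwise stabilizer of a central `X` to fix `X`
pointwise, as `{x, g x} ⊆ X` is central. Normality makes `stab(x)` depend only on the orbit of
`x`, whence (a). -/

open MulAction

theorem MulAction.stabilizer_smul_eq_of_normal {G α : Type*} [Group G] [MulAction G α]
    {a : α} (hN : (stabilizer G a).Normal) (g : G) :
    stabilizer G (g • a) = stabilizer G a := by
  rw [stabilizer_smul_eq_stabilizer_map_conj]
  exact @Subgroup.Normal.map_conj_eq _ _ _ hN g

theorem FinSemimatroid.pair_mem_of_mem {S : Type*} [DecidableEq S] (M : FinSemimatroid S)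
    {X : Finset S} (hX : X ∈ M.C) {x y : S} (hx : x ∈ X) (hy : y ∈ X) :
    ({x, y} : Finset S) ∈ M.C :=
  M.downClosed hX (Finset.insert_subset hx (Finset.singleton_subset_iff.2 hy))

namespace GSemimatroid

section Normal

variable {G S : Type*} [Group G] [MulAction G S]

theorem stabilizer_eq_of_orbOf_eq (hnorm : ∀ x : S, (stabilizer G x).Normal) {x y : S}
    (h : orbOf G x = orbOf G y) : stabilizer G x = stabilizer G y := by
  obtain ⟨g, rfl⟩ : x ∈ orbit G y := Quotient.exact h
  exact stabilizer_smul_eq_of_normal (hnorm y) g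

theorem iInf_stabilizer_le_of_under_subset (hnorm : ∀ x : S, (stabilizer G x).Normal)
    {X X' : Finset S} (hsub : under G X' ⊆ under G X) :
    ⨅ x ∈ X, stabilizer G x ≤ ⨅ x ∈ X', stabilizer G x := by
  refine le_iInf₂ fun x' hx' => ?_
  obtain ⟨x, hx, hxx'⟩ := hsub ⟨x', hx', rfl⟩
  exact (iInf₂_le x hx).trans_eq (stabilizer_eq_of_orbOf_eq hnorm hxx')

theorem iInf_stabilizer_eq_of_under_eq (hnorm : ∀ x : S, (stabilizer G x).Normal)
    {X X' : Finset S} (h : under G X' = under G X) :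
    ⨅ x ∈ X, stabilizer G x = ⨅ x ∈ X', stabilizer G x :=
  le_antisymm (iInf_stabilizer_le_of_under_subset hnorm h.le)
    (iInf_stabilizer_le_of_under_subset hnorm h.ge)

end Normal

variable {G S : Type*} [Group G] [MulAction G S] [DecidableEq S] (M : GSemimatroid G S)

theorem stabilizer_eq_iInf (htr : M.Translative) {X : Finset S} (hX : X ∈ M.C) :
    stabilizer G X = ⨅ x ∈ X, stabilizer G x := by
  refine le_antisymm (fun g hg => Subgroup.mem_iInf.2 fun x => Subgroup.mem_iInf.2 fun hx => ?_)
    (fun g hg => ?_)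
  · have hgx : g • x ∈ X := (mem_stabilizer_iff.1 hg) ▸ Finset.smul_mem_smul_finset hx
    exact htr g x (M.pair_mem_of_mem hX hx hgx)
  · simp only [Subgroup.mem_iInf, mem_stabilizer_iff] at hg
    rw [mem_stabilizer_iff, Finset.smul_finset_def, Finset.image_congr hg, Finset.image_id']

/-- If `g` fixes `X ∖ {x₀}` pointwise, then `X ∩ gX ⊇ X ∖ {x₀}` has the rank of `X`, so (CR1)
makes `X ∪ gX`, and hence `{x₀, g x₀}`, central. -/
theorem pair_smul_mem_of_rk_erase_eq {X : Finset S} (hX : X ∈ M.C) {x₀ : S} (hx₀ : x₀ ∈ X)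
    (hrk : M.rk (X.erase x₀) = M.rk X) {g : G} (hg : ∀ y ∈ X.erase x₀, g • y = y) :
    ({x₀, g • x₀} : Finset S) ∈ M.C := by
  have hgX : X.image (g • ·) ∈ M.C := M.smul_mem g hX
  have hinter : X ∩ X.image (g • ·) ∈ M.C := M.downClosed hX Finset.inter_subset_left
  have herase_sub : X.erase x₀ ⊆ X ∩ X.image (g • ·) := fun y hy =>
    Finset.mem_inter.2 ⟨Finset.mem_of_mem_erase hy,
      Finset.mem_image.2 ⟨y, Finset.mem_of_mem_erase hy, hg y hy⟩⟩
  have hrk_inter : M.rk X = M.rk (X ∩ X.image (g • ·)) := le_antisymm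
    (hrk ▸ M.r2 (M.downClosed hX (Finset.erase_subset _ _)) hinter herase_sub)
    (M.r2 hinter hX Finset.inter_subset_left)
  exact M.pair_mem_of_mem (M.cr1 hX hgX hrk_inter) (Finset.mem_union_left _ hx₀)
    (Finset.mem_union_right _ (Finset.mem_image_of_mem _ hx₀))

theorem iInf_stabilizer_erase_le (htr : M.Translative) {X : Finset S} (hX : X ∈ M.C)
    {x₀ : S} (hx₀ : x₀ ∈ X) (hrk : M.rk (X.erase x₀) = M.rk X) :
    ⨅ x ∈ X.erase x₀, stabilizer G x ≤ stabilizer G x₀ := fun g hg => by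
  simp only [Subgroup.mem_iInf, mem_stabilizer_iff] at hg
  exact htr g x₀ (M.pair_smul_mem_of_rk_erase_eq hX hx₀ hrk hg)

end GSemimatroid

theorem almostArithmetic_stabilizers_general
    {G S : Type*} [Group G] [MulAction G S] [DecidableEq S]
    (M : GSemimatroid G S) (haa : M.AlmostArithmetic)
    (X : Finset S) (hX : X ∈ M.C) :
    MulAction.stabilizer G X = (⨅ x ∈ X, MulAction.stabilizer G x) ∧
    (∀ X' ∈ M.C, under G X' = under G X →
      MulAction.stabilizer G X = MulAction.stabilizer G X') ∧
    (∀ x₀ ∈ X, M.rk (X.erase x₀) = M.rk X →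
      MulAction.stabilizer G X = MulAction.stabilizer G (X.erase x₀)) := by
  obtain ⟨htr, hnorm⟩ := haa
  refine ⟨M.stabilizer_eq_iInf htr hX, fun X' hX' hunder => ?_, fun x₀ hx₀ hrk => ?_⟩
  · rw [M.stabilizer_eq_iInf htr hX, M.stabilizer_eq_iInf htr hX',
      iInf_stabilizer_eq_of_under_eq hnorm hunder]
  · have hsplit : ⨅ x ∈ X, stabilizer G x =
        stabilizer G x₀ ⊓ ⨅ x ∈ X.erase x₀, stabilizer G x := by
      rw [← Finset.iInf_insert, Finset.insert_erase hx₀]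
    rw [M.stabilizer_eq_iInf htr hX,
      M.stabilizer_eq_iInf htr (M.downClosed hX (Finset.erase_subset _ _)), hsplit,
      inf_eq_right.2 (M.iInf_stabilizer_erase_le htr hX hx₀ hrk)]

/-- For an almost-arithmetic cofinite `G`-semimatroid and `X ∈ 𝒞`:
the setwise stabilizer of `X` equals `⋂_{x ∈ X} stab(x)`; (a) it only depends on `X̲`;
(b) it is unchanged upon removing an element that does not lower the rank. -/
theorem almostArithmetic_stabilizers
    {G S : Type*} [Group G] [MulAction G S] [DecidableEq S]
    (M : GSemimatroid G S) (hcof : M.Cofinite) (haa : M.AlmostArithmetic)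
    (X : Finset S) (hX : X ∈ M.C) :
    MulAction.stabilizer G X = (⨅ x ∈ X, MulAction.stabilizer G x) ∧
    (∀ X' ∈ M.C, under G X' = under G X →
      MulAction.stabilizer G X = MulAction.stabilizer G X') ∧
    (∀ x₀ ∈ X, M.rk (X.erase x₀) = M.rk X →
      MulAction.stabilizer G X = MulAction.stabilizer G (X.erase x₀)) :=
  almostArithmetic_stabilizers_general M haa X hX
end
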